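/- arXiv:1811.09220 — 3 statements merged into one kernel-verified Lean document; each statement's English description precedes it below -/
import Mathlib

section
/- Let R be a normed ring. Any morphism f : M → N between finitely generated R-modules is bounded with respect to filling norms: there exists C > 0 such that ‖f(m)‖_N ≤ C‖m‖_M for all m ∈ M. -/
variable {R : Type*} [Ring R]

/-- The ℓ¹-norm on the finitely generated based free `R`-module `Λ → R`. -/
noncomputable def l1Norm {Λ : Type*} [Fintype Λ] (ν : RingNorm R) (f : Λ → R) : ℝ :=
  ∑ x, ν (f x)

/-- The filling norm on `M` induced by a surjection `ρ : (Λ → R) → M`. -/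
noncomputable def fillingNorm {Λ : Type*} [Fintype Λ] {M : Type*} [AddCommGroup M] [Module R M]
    (ν : RingNorm R) (ρ : (Λ → R) →ₗ[R] M) (m : M) : ℝ :=
  sInf {c : ℝ | ∃ x : Λ → R, ρ x = m ∧ l1Norm ν x = c}

/-! The composite `f ∘ ρM` is a map out of a free module, so it lifts through the surjection `ρN`
to a linear map `g` between the free modules. A linear map between finitely generated free modules
is bounded for the `ℓ¹`-norms, by the total norm of the images of the basis vectors, and taking
infima over the representatives `x` of `m` turns `‖g x‖₁ ≤ C ‖x‖₁` into the bound on filling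
norms. -/

section l1Norm

variable {Λ : Type*} [Fintype Λ] (ν : RingNorm R)

lemma l1Norm_nonneg (x : Λ → R) : 0 ≤ l1Norm ν x :=
  Finset.sum_nonneg fun _ _ => apply_nonneg ν _

lemma l1Norm_zero : l1Norm ν (0 : Λ → R) = 0 := by
  simp [l1Norm]

lemma l1Norm_add_le (x y : Λ → R) : l1Norm ν (x + y) ≤ l1Norm ν x + l1Norm ν y := by
  simp only [l1Norm, ← Finset.sum_add_distrib]
  exact Finset.sum_le_sum fun j _ => map_add_le_add ν (x j) (y j)

lemma l1Norm_smul_le (r : R) (x : Λ → R) : l1Norm ν (r • x) ≤ ν r * l1Norm ν x := by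
  simp only [l1Norm, Finset.mul_sum]
  exact Finset.sum_le_sum fun j _ => map_mul_le_mul ν r (x j)

lemma l1Norm_sum_le {ι : Type*} (s : Finset ι) (x : ι → Λ → R) :
    l1Norm ν (∑ i ∈ s, x i) ≤ ∑ i ∈ s, l1Norm ν (x i) :=
  Finset.le_sum_of_subadditive (l1Norm ν) (l1Norm_zero ν).le (l1Norm_add_le ν) s x

lemma norm_le_l1Norm (x : Λ → R) (i : Λ) : ν (x i) ≤ l1Norm ν x :=
  Finset.single_le_sum (f := fun j => ν (x j)) (fun _ _ => apply_nonneg ν _) (Finset.mem_univ i)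

lemma exists_l1Norm_map_le {Λ' : Type*} [Fintype Λ'] (φ : (Λ → R) →ₗ[R] (Λ' → R)) :
    ∃ C : ℝ, 0 < C ∧ ∀ x, l1Norm ν (φ x) ≤ C * l1Norm ν x := by
  classical
  set e : Λ → Λ → R := fun i => Pi.single i 1
  refine ⟨1 + ∑ i, l1Norm ν (φ (e i)),
    add_pos_of_pos_of_nonneg one_pos (Finset.sum_nonneg fun i _ => l1Norm_nonneg ν _), fun x => ?_⟩
  have hφ : φ x = ∑ i, x i • φ (e i) := by
    convert φ.pi_apply_eq_sum_univ x using 4 with i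
    ext j
    simp [e, Pi.single_apply, eq_comm]
  calc l1Norm ν (φ x) ≤ ∑ i, ν (x i) * l1Norm ν (φ (e i)) := by
        rw [hφ]
        exact (l1Norm_sum_le ν _ _).trans
          (Finset.sum_le_sum fun i _ => l1Norm_smul_le ν (x i) (φ (e i)))
    _ ≤ ∑ i, l1Norm ν x * l1Norm ν (φ (e i)) :=
        Finset.sum_le_sum fun i _ => by
          gcongr
          · exact l1Norm_nonneg ν _
          · exact norm_le_l1Norm ν x i
    _ ≤ (1 + ∑ i, l1Norm ν (φ (e i))) * l1Norm ν x := by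
        rw [← Finset.mul_sum, mul_comm]
        gcongr
        · exact l1Norm_nonneg ν _
        · linarith

end l1Norm

section fillingNorm

variable {Λ : Type*} [Fintype Λ] {M : Type*} [AddCommGroup M] [Module R M]
  (ν : RingNorm R) {ρ : (Λ → R) →ₗ[R] M}

lemma fillingNorm_le_l1Norm {m : M} {x : Λ → R} (hx : ρ x = m) :
    fillingNorm ν ρ m ≤ l1Norm ν x :=
  csInf_le ⟨0, by rintro _ ⟨y, -, rfl⟩; exact l1Norm_nonneg ν y⟩ ⟨x, hx, rfl⟩

lemma le_mul_fillingNorm (hρ : Function.Surjective ρ) {C a : ℝ} (hC : 0 < C) (m : M)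
    (h : ∀ x, ρ x = m → a ≤ C * l1Norm ν x) : a ≤ C * fillingNorm ν ρ m := by
  rw [← div_le_iff₀' hC]
  obtain ⟨x₀, hx₀⟩ := hρ m
  refine le_csInf ⟨_, x₀, hx₀, rfl⟩ ?_
  rintro _ ⟨x, hx, rfl⟩
  rw [div_le_iff₀' hC]
  exact h x hx

end fillingNorm

/-- Any morphism between finitely generated `R`-modules is bounded with respect to filling
norms: there is `C > 0` with `‖f m‖_N ≤ C * ‖m‖_M` for all `m`. -/
theorem morphism_bounded_fillingNorms {ΛM ΛN : Type*} [Fintype ΛM] [Fintype ΛN]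
    {M N : Type*} [AddCommGroup M] [Module R M] [AddCommGroup N] [Module R N]
    (ν : RingNorm R)
    (ρM : (ΛM → R) →ₗ[R] M) (hρM : Function.Surjective ρM)
    (ρN : (ΛN → R) →ₗ[R] N) (hρN : Function.Surjective ρN)
    (f : M →ₗ[R] N) :
    ∃ C : ℝ, 0 < C ∧ ∀ m : M, fillingNorm ν ρN (f m) ≤ C * fillingNorm ν ρM m := by
  obtain ⟨g, hg⟩ := Module.projective_lifting_property ρN (f ∘ₗ ρM) hρN
  obtain ⟨C, hC, hgC⟩ := exists_l1Norm_map_le ν g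
  refine ⟨C, hC, fun m => le_mul_fillingNorm ν hρM hC m fun x hx => ?_⟩
  calc fillingNorm ν ρN (f m) ≤ l1Norm ν (g x) :=
        fillingNorm_le_l1Norm ν (by rw [← hx]; exact LinearMap.congr_fun hg x)
    _ ≤ C * l1Norm ν x := hgC x
end

section
/- Let G be a group, H ≤ G a subgroup, and R a normed ring. If M is a free RG-module with ℓ¹-norm induced by a free RG-basis Λ, then M is free as an RH-module and admits an RH-basis Λ_H = {g·x : x ∈ Λ, g ∈ S} (S a right transversal of H in G) whose induced ℓ¹-norm on M equals the original ℓ¹-norm. -/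
variable {R : Type*} [Ring R]

/-- The ℓ¹-norm on a group ring `MonoidAlgebra R Γ` induced by the free `R`-basis `Γ`. -/
noncomputable def l1GroupRing {Γ : Type*} (ν : RingNorm R) (a : MonoidAlgebra R Γ) : ℝ :=
  a.coeff.sum fun _ r => ν r

/-- The ℓ¹-norm on the free `MonoidAlgebra R Γ`-module with basis `Λ`. -/
noncomputable def l1FreeGroupRing {Γ Λ : Type*} (ν : RingNorm R)
    (m : Λ →₀ MonoidAlgebra R Γ) : ℝ :=
  m.sum fun _ a => l1GroupRing ν a

/-!
Each `g ∈ G` factors uniquely as `g = h * s` with `h ∈ H`, `s ∈ S`, so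
`RG = ⨁_{s ∈ S} RH * s` as left `RH`-modules: left multiplication by `H` only moves the
`H`-factor. This decomposition merely relabels the `R`-coefficients of an element along
`g ↦ (s, h)`, so it preserves ℓ¹-norms. Applied coordinatewise on `Λ →₀ RG`, it is the
coordinate map of the `RH`-basis `(x, s) ↦ single x s`.
-/

namespace Subgroup.IsComplement

variable {k G : Type*} [Semiring k] [Group G] {H : Subgroup G} {S : Set G}
  (hS : IsComplement (H : Set G) S)

variable (k) in
/-- `a ↦ (s ↦ ∑ₕ a(h * s) • h)`, so that `a = ∑ₛ (hS.monoidAlgebraEquiv k a s) * s`. -/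
noncomputable def monoidAlgebraEquiv :
    MonoidAlgebra k G ≃+ (S →₀ MonoidAlgebra k H) :=
  MonoidAlgebra.coeffAddEquiv.trans <|
    (Finsupp.domCongr (hS.equiv.trans (Equiv.prodComm _ _))).trans <|
      Finsupp.curryAddEquiv.trans (Finsupp.mapRange.addEquiv MonoidAlgebra.coeffAddEquiv.symm)

theorem monoidAlgebraEquiv_single (g : G) (r : k) :
    hS.monoidAlgebraEquiv k (MonoidAlgebra.single g r) =
      Finsupp.single (hS.equiv g).2 (MonoidAlgebra.single (hS.equiv g).1 r) := by
  simp [monoidAlgebraEquiv]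

theorem monoidAlgebraEquiv_mapDomain_mul (c : MonoidAlgebra k H) (a : MonoidAlgebra k G) :
    hS.monoidAlgebraEquiv k (MonoidAlgebra.mapDomainRingHom k H.subtype c * a) =
      c • hS.monoidAlgebraEquiv k a := by
  induction c using MonoidAlgebra.induction_linear with
  | zero => simp
  | add c₁ c₂ h₁ h₂ => rw [map_add, add_mul, map_add, h₁, h₂, add_smul]
  | single h r =>
    induction a using MonoidAlgebra.induction_linear with
    | zero => simp
    | add a₁ a₂ h₁ h₂ => rw [mul_add, map_add, h₁, h₂, map_add, smul_add]
    | single g r' =>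
      simp [monoidAlgebraEquiv_single, MonoidAlgebra.mapDomainRingHom_apply,
        MonoidAlgebra.single_mul_single, hS.equiv_mul_left]

theorem sum_l1GroupRing_monoidAlgebraEquiv (ν : RingNorm R) (a : MonoidAlgebra R G) :
    ((hS.monoidAlgebraEquiv R a).sum fun _ b => l1GroupRing ν b) = l1GroupRing ν a := by
  rw [monoidAlgebraEquiv, AddEquiv.trans_apply, AddEquiv.trans_apply, AddEquiv.trans_apply,
    Finsupp.mapRange.addEquiv_apply, Finsupp.sum_mapRange_index (by simp [l1GroupRing])]
  change ((Finsupp.equivMapDomain _ a.coeff).curry.sum fun _ b => b.sum fun _ r => ν r) = _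
  rw [Finsupp.sum_curry_index, Finsupp.sum_equivMapDomain]
  rfl

variable (k) in
noncomputable def freeModuleEquiv (Λ : Type*) :
    (Λ →₀ MonoidAlgebra k G) ≃+ (Λ × S →₀ MonoidAlgebra k H) :=
  (Finsupp.mapRange.addEquiv (hS.monoidAlgebraEquiv k)).trans Finsupp.curryAddEquiv.symm

theorem freeModuleEquiv_apply {Λ : Type*} (m : Λ →₀ MonoidAlgebra k G) (x : Λ) (s : S) :
    hS.freeModuleEquiv k Λ m (x, s) = hS.monoidAlgebraEquiv k (m x) s :=
  rfl

theorem freeModuleEquiv_single_one {Λ : Type*} (x : Λ) (s : S) :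
    hS.freeModuleEquiv k Λ (Finsupp.single x (MonoidAlgebra.single (s : G) 1)) =
      Finsupp.single (x, s) 1 := by
  have hfst : (hS.equiv s).1 = 1 := hS.equiv_fst_eq_one_of_mem_of_one_mem H.one_mem s.2
  simp [freeModuleEquiv, monoidAlgebraEquiv_single, hfst,
    hS.equiv_snd_eq_self_of_mem_of_one_mem H.one_mem s.2, MonoidAlgebra.one_def]

theorem freeModuleEquiv_mapDomain_smul {Λ : Type*} (c : MonoidAlgebra k H)
    (m : Λ →₀ MonoidAlgebra k G) :
    hS.freeModuleEquiv k Λ (MonoidAlgebra.mapDomainRingHom k H.subtype c • m) =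
      c • hS.freeModuleEquiv k Λ m := by
  ext ⟨x, s⟩ : 1
  simp only [freeModuleEquiv_apply, Finsupp.smul_apply, smul_eq_mul,
    monoidAlgebraEquiv_mapDomain_mul]

theorem sum_l1GroupRing_freeModuleEquiv (ν : RingNorm R) {Λ : Type*}
    (m : Λ →₀ MonoidAlgebra R G) :
    ((hS.freeModuleEquiv R Λ m).sum fun _ b => l1GroupRing ν b) = l1FreeGroupRing ν m := by
  rw [freeModuleEquiv, AddEquiv.trans_apply, Finsupp.curryAddEquiv_symm_apply,
    Finsupp.sum_uncurry_index, Finsupp.mapRange.addEquiv_apply,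
    Finsupp.sum_mapRange_index (by simp)]
  simp only [sum_l1GroupRing_monoidAlgebraEquiv]
  rfl

end Subgroup.IsComplement

/-- A free `RG`-module `M` with basis `Λ` is, upon restriction to a subgroup `H ≤ G`, a free
`RH`-module with basis `Λ_H = {g • x : x ∈ Λ, g ∈ S}` for a right transversal `S` of `H` in
`G`, and the ℓ¹-norm induced by the `RH`-basis `Λ_H` equals the original ℓ¹-norm. -/
theorem free_module_restriction_basis_l1 {G : Type*} [Group G] (H : Subgroup G)
    (ν : RingNorm R) (Λ : Type*) :
    letI : Module (MonoidAlgebra R ↥H) (Λ →₀ MonoidAlgebra R G) :=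
      Module.compHom _ (MonoidAlgebra.mapDomainRingHom R H.subtype)
    ∃ S : Set G, Subgroup.IsComplement (H : Set G) S ∧
      ∃ b : Module.Basis (Λ × S) (MonoidAlgebra R ↥H) (Λ →₀ MonoidAlgebra R G),
        (∀ (x : Λ) (s : S),
          b (x, s) = Finsupp.single x (MonoidAlgebra.single (s : G) (1 : R))) ∧
        (∀ m : Λ →₀ MonoidAlgebra R G,
          ((b.repr m).sum fun _ a => l1GroupRing ν a) = l1FreeGroupRing ν m) := by
  let : Module (MonoidAlgebra R ↥H) (Λ →₀ MonoidAlgebra R G) :=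
    Module.compHom _ (MonoidAlgebra.mapDomainRingHom R H.subtype)
  obtain ⟨S, hS, -⟩ := H.exists_isComplement_right 1
  let e : (Λ →₀ MonoidAlgebra R G) ≃ₗ[MonoidAlgebra R H] (Λ × S →₀ MonoidAlgebra R H) :=
    { hS.freeModuleEquiv R Λ with map_smul' := hS.freeModuleEquiv_mapDomain_smul }
  refine ⟨S, hS, .ofRepr e, fun x s => ?_, hS.sum_l1GroupRing_freeModuleEquiv ν⟩
  rw [Module.Basis.coe_ofRepr, LinearEquiv.symm_apply_eq]
  exact (hS.freeModuleEquiv_single_one x s).symm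
end

section
/- Let R be a subring of ℚ, G a group with subgroup H, P a finitely generated RH-module, Q a finitely generated RG-module, and f : P → Q an RH-module morphism. If A and B are integral parts of P and Q respectively (over ℤH and ℤG), then there exists a positive integer m, invertible in R, such that f(m·A) ⊆ B. -/
/-!
Every element of a subring `R ≤ ℚ` is an integer divided by a natural number invertible in `R`;
clearing denominators coefficientwise, the same holds for `RΓ` over `ℤΓ`. Hence the `q ∈ Q` with
`n • q ∈ B` for some such `n` form an `RG`-submodule containing `B`, i.e. all of `Q`. Taking such
an `n` for the image of each of the finitely many generators of `A` and multiplying them gives `m`.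
-/

/-- The canonical ring homomorphism `ℤΓ → RΓ` on group rings induced by `ℤ → R`,
for a subring `R` of `ℚ`. -/
noncomputable def intCoeff (R : Subring ℚ) (Γ : Type*) [Monoid Γ] :
    MonoidAlgebra ℤ Γ →+* MonoidAlgebra R Γ :=
  MonoidAlgebra.liftNCRingHom
    (MonoidAlgebra.singleOneRingHom.comp (Int.castRingHom R))
    (MonoidAlgebra.of R Γ)
    (fun z g => by
      show _ * _ = _ * _
      simp only [RingHom.coe_comp, Function.comp_apply, eq_intCast]
      exact Int.cast_commute z _)

def invertibleNat (R : Subring ℚ) : Submonoid ℕ :=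
  (IsUnit.submonoid R).comap (Nat.castRingHom R)

@[simp] theorem mem_invertibleNat {R : Subring ℚ} {n : ℕ} : n ∈ invertibleNat R ↔ IsUnit (n : R) :=
  Iff.rfl

theorem pos_of_mem_invertibleNat {R : Subring ℚ} {n : ℕ} (hn : n ∈ invertibleNat R) : 0 < n :=
  Nat.pos_of_ne_zero fun h => by simp [h] at hn

theorem Subring.exists_nsmul_eq_intCast (R : Subring ℚ) (r : R) :
    ∃ n ∈ invertibleNat R, ∃ z : ℤ, (z : R) = n • r := by
  obtain ⟨q, hq⟩ := r
  obtain ⟨u, v, huv⟩ : IsCoprime q.num q.den := Int.isCoprime_iff_gcd_eq_one.mpr q.reduced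
  have hnum : q * q.den = q.num := q.mul_den_eq_num
  refine ⟨q.den, ?_, q.num, Subtype.ext ?_⟩
  -- Bézout `u * num + v * den = 1` makes `u * q + v` the inverse of `den` in `R`.
  · refine IsUnit.of_mul_eq_one (u • ⟨q, hq⟩ + (v : R)) (Subtype.ext ?_)
    push_cast [zsmul_eq_mul]
    linear_combination (u : ℚ) * hnum + (by exact_mod_cast huv : (u * q.num + v * q.den : ℚ) = 1)
  · simp

theorem intCoeff_single (R : Subring ℚ) {Γ : Type*} [Monoid Γ] (g : Γ) (z : ℤ) :
    intCoeff R Γ (MonoidAlgebra.single g z) = MonoidAlgebra.single g (z : R) := by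
  show MonoidAlgebra.liftNC _ _ (MonoidAlgebra.single g z) = _
  rw [MonoidAlgebra.liftNC_single]
  show MonoidAlgebra.single 1 (z:R) * MonoidAlgebra.single g 1 = _
  rw [MonoidAlgebra.single_mul_single, one_mul, mul_one]

theorem exists_nsmul_eq_intCoeff (R : Subring ℚ) {Γ : Type*} [Monoid Γ]
    (r : MonoidAlgebra R Γ) : ∃ n ∈ invertibleNat R, ∃ z, intCoeff R Γ z = n • r := by
  induction r using MonoidAlgebra.induction with
  | zero => exact ⟨1, one_mem _, 0, by simp⟩
  | single_add g c r _ _ ih =>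
    obtain ⟨n, hn, z, hz⟩ := ih
    obtain ⟨k, hk, w, hw⟩ := R.exists_nsmul_eq_intCast c
    refine ⟨k * n, mul_mem hk hn, n • MonoidAlgebra.single g w + k • z, ?_⟩
    rw [map_add, map_nsmul, map_nsmul, intCoeff_single, hz, hw, ← MonoidAlgebra.smul_single,
      smul_add, mul_smul, mul_smul, smul_comm n k]

theorem intCoeff_comp_mapDomainRingHom (R : Subring ℚ) {G : Type*} [Group G] (H : Subgroup G) :
    (intCoeff R G).comp (MonoidAlgebra.mapDomainRingHom ℤ H.subtype) =
      (MonoidAlgebra.mapDomainRingHom R H.subtype).comp (intCoeff R H) := by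
  apply MonoidAlgebra.ringHom_ext <;> intro a <;>
    simp [MonoidAlgebra.mapDomainRingHom, intCoeff_single]

open Submodule in
theorem exists_nsmul_mem_of_span_eq_top (R : Subring ℚ) {Γ : Type*} [Monoid Γ] {M : Type*}
    [AddCommGroup M] [Module (MonoidAlgebra R Γ) M] :
    letI : Module (MonoidAlgebra ℤ Γ) M := Module.compHom _ (intCoeff R Γ)
    ∀ B : Submodule (MonoidAlgebra ℤ Γ) M, span (MonoidAlgebra R Γ) (B : Set M) = ⊤ →
      ∀ x : M, ∃ n ∈ invertibleNat R, n • x ∈ B := by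
  let : Module (MonoidAlgebra ℤ Γ) M := Module.compHom _ (intCoeff R Γ)
  intro B hB x
  induction (hB ▸ mem_top : x ∈ span (MonoidAlgebra R Γ) (B : Set M)) using span_induction with
  | mem x hx => exact ⟨1, one_mem _, by simpa using hx⟩
  | zero => exact ⟨1, one_mem _, by simp⟩
  | add x y _ _ hx hy =>
    obtain ⟨n, hn, hnx⟩ := hx
    obtain ⟨k, hk, hky⟩ := hy
    refine ⟨n * k, mul_mem hn hk, ?_⟩
    rw [smul_add, mul_comm, mul_smul, mul_comm, mul_smul]
    exact B.add_mem (B.toAddSubmonoid.nsmul_mem hnx k) (B.toAddSubmonoid.nsmul_mem hky n)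
  | smul r x _ hx =>
    obtain ⟨n, hn, hnx⟩ := hx
    obtain ⟨k, hk, z, hz⟩ := exists_nsmul_eq_intCoeff R r
    refine ⟨k * n, mul_mem hk hn, ?_⟩
    have : z • (n • x) = (k * n) • (r • x) := by
      rw [show z • (n • x) = intCoeff R Γ z • (n • x) from rfl, hz, smul_assoc, smul_comm r n,
        mul_smul]
    exact this ▸ B.smul_mem z hnx

open Submodule in
theorem Submodule.FG.exists_nsmul_mem {Λ M : Type*} [Semiring Λ] [AddCommMonoid M] [Module Λ M]
    {A : Submodule Λ M} (hA : A.FG) (N : Submodule Λ M) (S : Submonoid ℕ)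
    (h : ∀ a ∈ A, ∃ n ∈ S, n • a ∈ N) : ∃ n ∈ S, ∀ a ∈ A, n • a ∈ N := by
  classical
  obtain ⟨s, rfl⟩ := hA
  choose! n hnS hn using fun x (hx : x ∈ s) => h x (subset_span hx)
  refine ⟨∏ x ∈ s, n x, prod_mem hnS, fun a ha => ?_⟩
  have : (s : Set M) ⊆ N.comap ((∏ x ∈ s, n x) • LinearMap.id) := fun x hx => by
    rw [SetLike.mem_coe, mem_comap, LinearMap.smul_apply, LinearMap.id_apply,
      ← Finset.prod_erase_mul s n hx, mul_smul]
    exact N.toAddSubmonoid.nsmul_mem (hn x hx) _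
  exact span_le.mpr this ha

theorem map_intCoeff_smul (R : Subring ℚ) {G : Type*} [Group G] (H : Subgroup G)
    {P Q : Type*} [AddCommGroup P] [Module (MonoidAlgebra R H) P]
    [AddCommGroup Q] [Module (MonoidAlgebra R G) Q] :
    letI : Module (MonoidAlgebra R H) Q :=
      Module.compHom _ (MonoidAlgebra.mapDomainRingHom R H.subtype)
    ∀ (f : P →ₗ[MonoidAlgebra R H] Q) (z : MonoidAlgebra ℤ H) (p : P),
      f (intCoeff R H z • p) =
        intCoeff R G (MonoidAlgebra.mapDomainRingHom ℤ H.subtype z) • f p := by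
  let : Module (MonoidAlgebra R H) Q :=
    Module.compHom _ (MonoidAlgebra.mapDomainRingHom R H.subtype)
  intro f z p
  rw [map_smul, ← RingHom.comp_apply, intCoeff_comp_mapDomainRingHom]
  rfl

theorem integral_part_image_subgroup_general (R : Subring ℚ) {G : Type*} [Group G] (H : Subgroup G)
    {P Q : Type*} [AddCommGroup P] [Module (MonoidAlgebra R ↥H) P]
    [AddCommGroup Q] [Module (MonoidAlgebra R G) Q] :
    letI : Module (MonoidAlgebra R ↥H) Q :=
      Module.compHom _ (MonoidAlgebra.mapDomainRingHom R H.subtype)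
    letI : Module (MonoidAlgebra ℤ ↥H) P := Module.compHom _ (intCoeff R ↥H)
    letI : Module (MonoidAlgebra ℤ G) Q := Module.compHom _ (intCoeff R G)
    ∀ (f : P →ₗ[MonoidAlgebra R ↥H] Q)
      (A : Submodule (MonoidAlgebra ℤ ↥H) P) (B : Submodule (MonoidAlgebra ℤ G) Q),
      A.FG → Submodule.span (MonoidAlgebra R ↥H) (A : Set P) = ⊤ →
      B.FG → Submodule.span (MonoidAlgebra R G) (B : Set Q) = ⊤ →
      ∃ m : ℕ, 0 < m ∧ IsUnit ((m : R)) ∧ ∀ a ∈ A, f ((m : ℤ) • a) ∈ B := by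
  let : Module (MonoidAlgebra R ↥H) Q :=
    Module.compHom _ (MonoidAlgebra.mapDomainRingHom R H.subtype)
  let : Module (MonoidAlgebra ℤ ↥H) P := Module.compHom _ (intCoeff R ↥H)
  let : Module (MonoidAlgebra ℤ G) Q := Module.compHom _ (intCoeff R G)
  intro f A B hA _ _ hB
  let fℤ : P →ₛₗ[MonoidAlgebra.mapDomainRingHom ℤ H.subtype] Q :=
    { f.toAddMonoidHom with map_smul' := map_intCoeff_smul R H f }
  obtain ⟨m, hm, hmA⟩ := hA.exists_nsmul_mem (B.comap fℤ) (invertibleNat R) fun a _ => by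
    simpa [fℤ] using exists_nsmul_mem_of_span_eq_top R B hB (f a)
  exact ⟨m, pos_of_mem_invertibleNat hm, hm, fun a ha => by rw [natCast_zsmul]; exact hmA a ha⟩

/-- Let `R ≤ ℚ`, `H ≤ G` groups, `P` a finitely generated `RH`-module, `Q` a finitely
generated `RG`-module (viewed as an `RH`-module by restriction of scalars), and
`f : P → Q` an `RH`-morphism. If `A` and `B` are integral parts of `P` and `Q`
(over `ℤH` and `ℤG` respectively), then there is a positive integer `m`, invertible in `R`,
with `f(m • A) ⊆ B`. -/
theorem integral_part_image_subgroup (R : Subring ℚ) {G : Type*} [Group G] (H : Subgroup G)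
    {P Q : Type*} [AddCommGroup P] [Module (MonoidAlgebra R ↥H) P]
    [AddCommGroup Q] [Module (MonoidAlgebra R G) Q]
    [Module.Finite (MonoidAlgebra R ↥H) P] [Module.Finite (MonoidAlgebra R G) Q] :
    letI : Module (MonoidAlgebra R ↥H) Q :=
      Module.compHom _ (MonoidAlgebra.mapDomainRingHom R H.subtype)
    letI : Module (MonoidAlgebra ℤ ↥H) P := Module.compHom _ (intCoeff R ↥H)
    letI : Module (MonoidAlgebra ℤ G) Q := Module.compHom _ (intCoeff R G)
    ∀ (f : P →ₗ[MonoidAlgebra R ↥H] Q)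
      (A : Submodule (MonoidAlgebra ℤ ↥H) P) (B : Submodule (MonoidAlgebra ℤ G) Q),
      A.FG → Submodule.span (MonoidAlgebra R ↥H) (A : Set P) = ⊤ →
      B.FG → Submodule.span (MonoidAlgebra R G) (B : Set Q) = ⊤ →
      ∃ m : ℕ, 0 < m ∧ IsUnit ((m : R)) ∧ ∀ a ∈ A, f ((m : ℤ) • a) ∈ B :=
  integral_part_image_subgroup_general R H
end
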